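/- In the Cayley–Dickson model of the octonions, the norm-square is multiplicative: N (z₁ * z₂) = N z₁ * N z₂ for all z₁, z₂ ∈ 𝕆 (equivalently, |z₁ z₂| = |z₁| |z₂| for the octonion norm |z| = √(N z)). -/

import Mathlib

noncomputable section

/-- Cayley–Dickson model of the octonions over the quaternions. -/
def Octo : Type := Quaternion ℝ × Quaternion ℝ

/-- Cayley–Dickson multiplication: (a,b) * (c,d) = (a*c − (star d)*b, d*a + b*(star c)). -/
instance : Mul Octo :=
  ⟨fun z w => ((z.1 * w.1 - star w.2 * z.2, w.2 * z.1 + z.2 * star w.1) :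
      Quaternion ℝ × Quaternion ℝ)⟩

instance : Add Octo := ⟨fun z w => ((z.1 + w.1, z.2 + w.2) : Quaternion ℝ × Quaternion ℝ)⟩
instance : Sub Octo := ⟨fun z w => ((z.1 - w.1, z.2 - w.2) : Quaternion ℝ × Quaternion ℝ)⟩
instance : Neg Octo := ⟨fun z => ((-z.1, -z.2) : Quaternion ℝ × Quaternion ℝ)⟩
instance : SMul ℝ Octo := ⟨fun r z => ((r • z.1, r • z.2) : Quaternion ℝ × Quaternion ℝ)⟩

/-- Octonion conjugation. -/
def oconj (z : Octo) : Octo := (star z.1, -z.2)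

/-- Embedding of the quaternions. -/
def ι (γ : Quaternion ℝ) : Octo := (γ, 0)

/-- The distinguished element e₄ = (0,1). -/
def e₄ : Octo := ((0 : Quaternion ℝ), (1 : Quaternion ℝ))

/-- Norm-square of an octonion. -/
def N (z : Octo) : ℝ := Quaternion.normSq z.1 + Quaternion.normSq z.2

namespace Quaternion

variable {R : Type*} [CommRing R]

theorem re_mul_comm (x y : ℍ[R]) : (x * y).re = (y * x).re := by
  simp only [re_mul]
  ring

theorem normSq_sub (x y : ℍ[R]) : normSq (x - y) = normSq x + normSq y - 2 * (x * star y).re := by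
  rw [sub_eq_add_neg, normSq_add, normSq_neg, star_neg, mul_neg, re_neg]
  ring

end Quaternion

open Quaternion

/- Expanding both squared norms gives the four products of norms plus the cross terms
`-2 Re(a c b̄ d)` and `2 Re(d a c b̄)`, which cancel because `Re(x y) = Re(y x)`. -/
/-- In the Cayley–Dickson model of the octonions, the norm-square is multiplicative:
    N (z₁ * z₂) = N z₁ * N z₂ (equivalently |z₁ z₂| = |z₁| |z₂| for |z| = √(N z)). -/
theorem normSq_mul (z₁ z₂ : Octo) : N (z₁ * z₂) = N z₁ * N z₂ := by
  obtain ⟨a, b⟩ := z₁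
  obtain ⟨c, d⟩ := z₂
  show normSq (a * c - star d * b) + normSq (d * a + b * star c) =
    (normSq a + normSq b) * (normSq c + normSq d)
  have cross : (a * c * star (star d * b)).re = (d * a * star (b * star c)).re := by
    rw [star_mul, star_star, star_mul, star_star, ← mul_assoc, re_mul_comm]
    simp only [mul_assoc]
  rw [normSq_sub, normSq_add, cross]
  simp only [map_mul, normSq_star]
  ring
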